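/- arXiv:1510.08006 — 4 statements merged into one kernel-verified Lean document; each statement's English description precedes it below -/
import Mathlib

section
/- Let C be a nonempty closed convex subset of a Hilbert space H and T : C → C closed and quasi-asymptotically nonexpansive with sequence k_n → 1, i.e., ‖Tⁿ x − p‖² ≤ k_n ‖x − p‖² for all n ≥ 1, x ∈ C, p ∈ F(T) ≠ ∅, and assume T is uniformly L-Lipschitz. Then F(T) is closed and convex. -/
/-!
Closedness of the fixed point set is immediate from the closedness of `T`. For convexity, let
`z = a • p + b • q` with `p, q` fixed points. The identity
`‖w - z‖² = a ‖w - p‖² + b ‖w - q‖² - a b ‖p - q‖²` at `w = Tⁿ z`, together with the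
quasi-asymptotic bounds at `p` and `q` and the same identity at `w = z`, gives
`‖Tⁿ z - z‖² ≤ (kₙ - 1) a b ‖p - q‖² → 0`. So `Tⁿ z → z`, hence also `T (Tⁿ z) → z`, and
closedness of `T` yields `T z = z`.
-/

open RealInnerProductSpace Filter Topology

/-- Closedness of a mapping `T : C → C` in the sense of the paper. -/
def HasSeqClosedGraphOn {X : Type*} [TopologicalSpace X] (T : X → X) (C : Set X) : Prop :=
  ∀ (u : ℕ → X) (x y : X), (∀ n, u n ∈ C) →
    Tendsto u atTop (𝓝 x) → Tendsto (fun n => T (u n)) atTop (𝓝 y) → T x = y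

section Topological

variable {X : Type*} [TopologicalSpace X] {T : X → X} {C : Set X}

theorem HasSeqClosedGraphOn.isClosed_fixedPointsOn [SequentialSpace X]
    (hT : HasSeqClosedGraphOn T C) (hC : IsClosed C) : IsClosed {x ∈ C | T x = x} := by
  refine IsSeqClosed.isClosed fun u x hu hux => ⟨hC.mem_of_tendsto hux
    (Eventually.of_forall fun n => (hu n).1), hT u x x (fun n => (hu n).1) hux ?_⟩
  simpa only [(hu _).2] using hux

theorem HasSeqClosedGraphOn.isFixedPt_of_tendsto_iterate (hT : HasSeqClosedGraphOn T C)
    (hmaps : Set.MapsTo T C C) {z : X} (hz : z ∈ C)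
    (hlim : Tendsto (fun n => T^[n] z) atTop (𝓝 z)) : T z = z := by
  refine hT _ z z (fun n => hmaps.iterate n hz) hlim ?_
  simpa only [Function.comp_def, Function.iterate_succ_apply'] using
    hlim.comp (tendsto_add_atTop_nat 1)

end Topological

theorem tendsto_of_norm_sub_sq_le {E ι : Type*} [SeminormedAddCommGroup E] {l : Filter ι}
    {u : ι → E} {x : E} {f : ι → ℝ} (hf : Tendsto f l (𝓝 0))
    (hle : ∀ᶠ i in l, ‖u i - x‖ ^ 2 ≤ f i) : Tendsto u l (𝓝 x) := by
  rw [tendsto_iff_norm_sub_tendsto_zero]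
  have hsqrt : Tendsto (fun i => √(f i)) l (𝓝 0) := by
    simpa only [Real.sqrt_zero] using hf.sqrt
  refine squeeze_zero' (Eventually.of_forall fun _ => norm_nonneg _) ?_ hsqrt
  filter_upwards [hle] with i hi
  exact Real.le_sqrt_of_sq_le hi

section InnerProductSpace

variable {H : Type*} [NormedAddCommGroup H] [InnerProductSpace ℝ H]

theorem norm_sub_smul_add_smul_sq (p q w : H) {a b : ℝ} (hab : a + b = 1) :
    ‖w - (a • p + b • q)‖ ^ 2 =
      a * ‖w - p‖ ^ 2 + b * ‖w - q‖ ^ 2 - a * b * ‖p - q‖ ^ 2 := by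
  simp only [← real_inner_self_eq_norm_sq, inner_sub_left, inner_sub_right, inner_add_left,
    inner_add_right, real_inner_smul_left, real_inner_smul_right, real_inner_comm p q,
    real_inner_comm w p, real_inner_comm w q]
  linear_combination (a * ⟪p, p⟫ + b * ⟪q, q⟫ - ⟪w, w⟫) * hab

theorem norm_sub_smul_add_smul_sq_le {p q w : H} {a b c : ℝ} (ha : 0 ≤ a) (hb : 0 ≤ b)
    (hab : a + b = 1)
    (hp : ‖w - p‖ ^ 2 ≤ c * ‖a • p + b • q - p‖ ^ 2)
    (hq : ‖w - q‖ ^ 2 ≤ c * ‖a • p + b • q - q‖ ^ 2) :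
    ‖w - (a • p + b • q)‖ ^ 2 ≤ (c - 1) * (a * b * ‖p - q‖ ^ 2) := by
  have hz := norm_sub_smul_add_smul_sq p q (a • p + b • q) hab
  rw [sub_self, norm_zero] at hz
  rw [norm_sub_smul_add_smul_sq p q w hab]
  linear_combination mul_le_mul_of_nonneg_left hp ha + mul_le_mul_of_nonneg_left hq hb - c * hz

theorem convex_fixedPointsOn_of_quasiAsymptotic {C : Set H} {T : H → H}
    (hconv : Convex ℝ C) (hmaps : Set.MapsTo T C C) (hT : HasSeqClosedGraphOn T C)
    {k : ℕ → ℝ} (hk : Tendsto k atTop (𝓝 1))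
    (hqane : ∀ n ≥ 1, ∀ x ∈ C, ∀ p ∈ C, T p = p → ‖T^[n] x - p‖ ^ 2 ≤ k n * ‖x - p‖ ^ 2) :
    Convex ℝ {x ∈ C | T x = x} := by
  rintro p ⟨hpC, hpT⟩ q ⟨hqC, hqT⟩ a b ha hb hab
  have hzC : a • p + b • q ∈ C := hconv hpC hqC ha hb hab
  refine ⟨hzC, hT.isFixedPt_of_tendsto_iterate hmaps hzC ?_⟩
  have hk' : Tendsto (fun n => (k n - 1) * (a * b * ‖p - q‖ ^ 2)) atTop (𝓝 0) := by
    simpa using (hk.sub_const 1).mul_const (a * b * ‖p - q‖ ^ 2)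
  refine tendsto_of_norm_sub_sq_le hk' ?_
  filter_upwards [eventually_ge_atTop 1] with n hn
  exact norm_sub_smul_add_smul_sq_le ha hb hab (hqane n hn _ hzC p hpC hpT)
    (hqane n hn _ hzC q hqC hqT)

end InnerProductSpace

theorem fixed_point_set_asymptotically_closed_convex_general {H : Type*} [NormedAddCommGroup H]
    [InnerProductSpace ℝ H] (C : Set H) (hcl : IsClosed C)
    (hconv : Convex ℝ C) (T : H → H) (hT : Set.MapsTo T C C)
    (k : ℕ → ℝ) (hklim : Tendsto k atTop (nhds 1))
    (hqane : ∀ n ≥ 1, ∀ x ∈ C, ∀ p ∈ C, T p = p →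
      ‖T^[n] x - p‖ ^ 2 ≤ k n * ‖x - p‖ ^ 2)
    (hclosed : ∀ (u : ℕ → H) (x y : H), (∀ n, u n ∈ C) →
      Tendsto u atTop (nhds x) → Tendsto (fun n => T (u n)) atTop (nhds y) → T x = y) :
    IsClosed {x ∈ C | T x = x} ∧ Convex ℝ {x ∈ C | T x = x} :=
  have hgraph : HasSeqClosedGraphOn T C := hclosed
  ⟨hgraph.isClosed_fixedPointsOn hcl,
    convex_fixedPointsOn_of_quasiAsymptotic hconv hT hgraph hklim hqane⟩

/-- The fixed point set of a closed, uniformly L-Lipschitz, quasi-asymptotically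
nonexpansive self-mapping (with sequence k_n → 1) is closed and convex. -/
theorem fixed_point_set_asymptotically_closed_convex {H : Type*} [NormedAddCommGroup H]
    [InnerProductSpace ℝ H] (C : Set H) (hne : C.Nonempty) (hcl : IsClosed C)
    (hconv : Convex ℝ C) (T : H → H) (hT : Set.MapsTo T C C)
    (hF : {x ∈ C | T x = x}.Nonempty)
    (k : ℕ → ℝ) (hk1 : ∀ n, 1 ≤ k n) (hklim : Tendsto k atTop (nhds 1))
    (hqane : ∀ n ≥ 1, ∀ x ∈ C, ∀ p ∈ C, T p = p →
      ‖T^[n] x - p‖ ^ 2 ≤ k n * ‖x - p‖ ^ 2)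
    (L : ℝ) (hL : 0 < L)
    (hlip : ∀ n ≥ 1, ∀ x ∈ C, ∀ y ∈ C, ‖T^[n] x - T^[n] y‖ ≤ L * ‖x - y‖)
    (hclosed : ∀ (u : ℕ → H) (x y : H), (∀ n, u n ∈ C) →
      Tendsto u atTop (nhds x) → Tendsto (fun n => T (u n)) atTop (nhds y) → T x = y) :
    IsClosed {x ∈ C | T x = x} ∧ Convex ℝ {x ∈ C | T x = x} :=
  fixed_point_set_asymptotically_closed_convex_general C hcl hconv T hT k hklim hqane hclosed
end

section
/- Let C be a closed convex subset of a Hilbert space H and f : C × C → ℝ a bifunction satisfying: f(x,x)=0; f monotone (f(x,y)+f(y,x) ≤ 0); for all x,y,z ∈ C, limsup_{t→0⁺} f(tz+(1−t)x, y) ≤ f(x,y); and f(x,·) convex and lower semicontinuous. Then for every r > 0 and x ∈ H there exists z ∈ C such that f(z,y) + (1/r)⟨y − z, z − x⟩ ≥ 0 for all y ∈ C. -/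
/-!
Put `Φ(y, z) = f(y, z) + ⟪z - y, z - x⟫ / r`. By Minty's argument, using (A1), (A3) and the
convexity in (A4), any `z ∈ C` with `Φ(y, z) ≤ 0` for all `y ∈ C` is a solution.

For finitely many `yᵢ ∈ C` and weights `w` in the simplex, monotonicity (A2) and convexity give
`∑ wᵢ Φ(yᵢ, ∑ wⱼ yⱼ) ≤ 0`, so by Sion's minimax theorem on the simplex the function
`max_i Φ(yᵢ, ·)` has nonpositive infimum on `C`. As `Φ(y, ·)` is `2/r`-strongly convex and lower
semicontinuous, this infimum is attained at some `z_T` (`T` the finite set of the `yᵢ`), and for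
`T ⊆ U` strong convexity bounds `‖z_T - z_U‖²` by the increase of the minimal value. Hence the net
`(z_T)` over the finite subsets of `C` is Cauchy, and by lower semicontinuity its limit satisfies
`Φ(y, z) ≤ 0` for every `y ∈ C`. Strong convexity thus replaces the weak compactness used in the
usual proof through the KKM lemma.
-/

open Set Filter Topology RealInnerProductSpace

theorem LowerSemicontinuousWithinAt.le_of_tendsto {α β : Type*} [TopologicalSpace α]
    {φ : α → ℝ} {C : Set α} {z : α} (hφ : LowerSemicontinuousWithinAt φ C z)
    {l : Filter β} [l.NeBot] {p : β → α} (hp : Tendsto p l (𝓝[C] z)) {c : ℝ}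
    (hc : ∀ᶠ b in l, φ (p b) ≤ c) : φ z ≤ c := by
  by_contra! h
  obtain ⟨b, hlt, hle⟩ := ((hp.eventually (hφ c h)).and hc).exists
  exact hlt.not_ge hle

theorem ConvexOn.exists_sub_mul_norm_le {E : Type*} [NormedAddCommGroup E] [NormedSpace ℝ E]
    {C : Set E} {g : E → ℝ} (hg : ConvexOn ℝ C g) {y₀ : E} (hy₀ : y₀ ∈ C)
    (hlsc : LowerSemicontinuousWithinAt g C y₀) :
    ∃ c K : ℝ, 0 ≤ K ∧ ∀ a ∈ C, c - K * ‖a - y₀‖ ≤ g a := by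
  obtain ⟨δ, hδ, hball⟩ := Metric.mem_nhdsWithin_iff.1 (hlsc (g y₀ - 1) (by linarith))
  refine ⟨g y₀ - 1, 2 / δ, by positivity, fun a ha => ?_⟩
  by_cases hnear : ‖a - y₀‖ < δ
  · have : g y₀ - 1 < g a := hball ⟨by rwa [Metric.mem_ball, dist_eq_norm], ha⟩
    have : 0 ≤ 2 / δ * ‖a - y₀‖ := by positivity
    linarith
  -- compare with the point of the segment `[y₀, a]` at distance `δ / 2` from `y₀`
  have hpos : 0 < ‖a - y₀‖ := by linarith [not_lt.1 hnear]
  set t := δ / (2 * ‖a - y₀‖)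
  have ht : 0 < t := by positivity
  have ht1 : t ≤ 1 := by rw [div_le_one (by positivity)]; linarith
  have htn : t * ‖a - y₀‖ = δ / 2 := by simp only [t]; field_simp
  have hb : g y₀ - 1 < g (y₀ + t • (a - y₀)) := hball
    ⟨by rw [Metric.mem_ball, dist_eq_norm, add_sub_cancel_left, norm_smul,
      Real.norm_of_nonneg ht.le]; linarith, hg.1.add_smul_sub_mem hy₀ ha ⟨ht.le, ht1⟩⟩
  have hcvx := hg.2 hy₀ ha (sub_nonneg.2 ht1) ht.le (sub_add_cancel 1 t)
  rw [show (1 - t) • y₀ + t • a = y₀ + t • (a - y₀) by module, smul_eq_mul, smul_eq_mul] at hcvx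
  refine le_of_mul_le_mul_left ?_ ht
  have : t * (2 / δ * ‖a - y₀‖) = 1 := by
    rw [mul_left_comm, htn]; field_simp
  nlinarith

theorem UniformConvexOn.sup {E : Type*} [NormedAddCommGroup E] [NormedSpace ℝ E] {C : Set E}
    {ψ : ℝ → ℝ} {f g : E → ℝ} (hf : UniformConvexOn C ψ f) (hg : UniformConvexOn C ψ g) :
    UniformConvexOn C ψ (f ⊔ g) := by
  refine ⟨hf.1, fun a ha b hb s t hs ht hst => sup_le ?_ ?_⟩
  · refine (hf.2 ha hb hs ht hst).trans ?_
    gcongr <;> simp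
  · refine (hg.2 ha hb hs ht hst).trans ?_
    gcongr <;> simp

section InnerProductSpace

variable {E : Type*} [NormedAddCommGroup E] [InnerProductSpace ℝ E] {C : Set E} {m : ℝ}
  {φ : E → ℝ}

theorem StrongConvexOn.midpoint_le (hφ : StrongConvexOn C m φ) {a b : E} (ha : a ∈ C)
    (hb : b ∈ C) :
    φ ((1 / 2 : ℝ) • a + (1 / 2 : ℝ) • b) ≤ (φ a + φ b) / 2 - m / 8 * ‖a - b‖ ^ 2 := by
  have := hφ.2 ha hb one_half_pos.le one_half_pos.le (add_halves 1)
  simp only [smul_eq_mul] at this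
  linarith

theorem StrongConvexOn.bddBelow_image (hφ : StrongConvexOn C m φ) (hm : 0 < m)
    (hlsc : LowerSemicontinuousOn φ C) (hne : C.Nonempty) : BddBelow (φ '' C) := by
  obtain ⟨y₀, hy₀⟩ := hne
  have hψ := strongConvexOn_iff_convex.1 hφ
  have hψlsc : LowerSemicontinuousWithinAt (fun a => φ a - m / 2 * ‖a‖ ^ 2) C y₀ := by
    simpa only [sub_eq_add_neg] using LowerSemicontinuousWithinAt.add (hlsc y₀ hy₀)
      ((by fun_prop : Continuous fun a : E => -(m / 2 * ‖a‖ ^ 2)).lowerSemicontinuous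
        |>.lowerSemicontinuousWithinAt C y₀)
  obtain ⟨c, K, hK, hcK⟩ := hψ.exists_sub_mul_norm_le hy₀ hψlsc
  refine ⟨c - K * ‖y₀‖ - K ^ 2 / (2 * m), ?_⟩
  rintro _ ⟨a, ha, rfl⟩
  have h1 := hcK a ha
  have h2 : ‖a - y₀‖ ≤ ‖a‖ + ‖y₀‖ := norm_sub_le a y₀
  have h3 : K ^ 2 / (2 * m) + m / 2 * ‖a‖ ^ 2 - K * ‖a‖ = (m * ‖a‖ - K) ^ 2 / (2 * m) := by
    field_simp; ring
  have h4 : 0 ≤ (m * ‖a‖ - K) ^ 2 / (2 * m) := by positivity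
  nlinarith

theorem StrongConvexOn.exists_isMinOn [CompleteSpace E] (hφ : StrongConvexOn C m φ) (hm : 0 < m)
    (hlsc : LowerSemicontinuousOn φ C) (hcl : IsClosed C) (hne : C.Nonempty) :
    ∃ z ∈ C, IsMinOn φ C z := by
  have hB := hφ.bddBelow_image hm hlsc hne
  set μ := sInf (φ '' C)
  have hμ : ∀ a ∈ C, μ ≤ φ a := fun a ha => csInf_le hB (mem_image_of_mem φ ha)
  set l := comap φ (𝓝 μ) ⊓ 𝓟 C
  have hl : l.NeBot := by
    refine inf_principal_neBot_iff.2 fun U hU => ?_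
    obtain ⟨V, hV, hVU⟩ := mem_comap.1 hU
    obtain ⟨_, hv, a, ha, rfl⟩ :=
      mem_closure_iff_nhds.1 (csInf_mem_closure (hne.image φ) hB) V hV
    exact ⟨a, hVU hv, ha⟩
  have hsmall : ∀ δ > 0, ∀ᶠ a in l, a ∈ C ∧ φ a < μ + δ := fun δ hδ =>
    ((eventually_principal.2 fun _ h => h).filter_mono inf_le_right).and
      (((eventually_lt_nhds (lt_add_of_pos_right μ hδ)).comap φ).filter_mono inf_le_left)
  have hcauchy : Cauchy l := by
    refine Metric.cauchy_iff.2 ⟨hl, fun ε hε => ⟨_, hsmall (m / 8 * ε ^ 2) (by positivity),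
      fun a ⟨ha, hφa⟩ b ⟨hb, hφb⟩ => ?_⟩⟩
    have hmid := hμ _ (hφ.1 ha hb one_half_pos.le one_half_pos.le (add_halves 1))
    have := hφ.midpoint_le ha hb
    have : m / 8 * ‖a - b‖ ^ 2 < m / 8 * ε ^ 2 := by linarith
    rw [dist_eq_norm]
    exact lt_of_pow_lt_pow_left₀ 2 hε.le (lt_of_mul_lt_mul_left this (by positivity))
  obtain ⟨z, hz⟩ := CompleteSpace.complete hcauchy
  have hlC : ∀ᶠ a in l, a ∈ C := (hsmall 1 one_pos).mono fun _ h => h.1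
  have hzC : z ∈ C := hcl.mem_of_tendsto (tendsto_id'.2 hz) hlC
  refine ⟨z, hzC, fun a ha => le_trans ?_ (hμ a ha)⟩
  refine le_of_forall_pos_le_add fun δ hδ => LowerSemicontinuousWithinAt.le_of_tendsto (hlsc z hzC)
    (tendsto_nhdsWithin_iff.2 ⟨tendsto_id'.2 hz, hlC⟩) ((hsmall δ hδ).mono fun _ h => h.2.le)

theorem StrongConvexOn.mul_sq_norm_sub_le_of_isMinOn (hφ : StrongConvexOn C m φ) {z a : E}
    (hz : z ∈ C) (hmin : IsMinOn φ C z) (ha : a ∈ C) : m / 4 * ‖z - a‖ ^ 2 ≤ φ a - φ z := by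
  have hmid : φ z ≤ φ ((1 / 2 : ℝ) • z + (1 / 2 : ℝ) • a) :=
    hmin (hφ.1 hz ha one_half_pos.le one_half_pos.le (add_halves 1))
  linarith [hφ.midpoint_le hz ha]

end InnerProductSpace

theorem Metric.cauchySeq_of_mul_sq_dist_le_sub {β X : Type*} [SemilatticeSup β] [Nonempty β]
    [PseudoMetricSpace X] {u : β → X} {μ : β → ℝ} (hμ : BddAbove (range μ)) {κ : ℝ} (hκ : 0 < κ)
    (h : ∀ T U, T ≤ U → κ * dist (u T) (u U) ^ 2 ≤ μ U - μ T) : CauchySeq u := by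
  refine Metric.cauchySeq_iff'.2 fun ε hε => ?_
  obtain ⟨N, hN⟩ := exists_lt_of_lt_ciSup (sub_lt_self (⨆ T, μ T) (by positivity : 0 < κ * ε ^ 2))
  refine ⟨N, fun U hU => ?_⟩
  have h1 := h N U hU
  have h2 := le_ciSup hμ U
  rw [dist_comm]
  exact lt_of_pow_lt_pow_left₀ 2 hε.le (lt_of_mul_lt_mul_left (by linarith) hκ.le)

theorem convexOn_sum_mul {ι E : Type*} [AddCommGroup E] [Module ℝ E] {C : Set E}
    (hC : Convex ℝ C) (s : Finset ι) {w : ι → ℝ} (hw : ∀ i ∈ s, 0 ≤ w i) {g : ι → E → ℝ}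
    (hg : ∀ i ∈ s, ConvexOn ℝ C (g i)) : ConvexOn ℝ C fun z => ∑ i ∈ s, w i * g i z := by
  simpa [Finset.sum_fn] using Finset.sum_induction (fun i => w i • g i) (ConvexOn ℝ C)
    (fun _ _ => ConvexOn.add) (convexOn_const 0 hC) fun i hi => (hg i hi).smul (hw i hi)

theorem exists_forall_lt_of_forall_mem_stdSimplex {ι E : Type*} [Fintype ι] [Nonempty ι]
    [TopologicalSpace E] [AddCommGroup E] [Module ℝ E] [IsTopologicalAddGroup E]
    [ContinuousSMul ℝ E] {C : Set E} (hC : Convex ℝ C) {g : ι → E → ℝ}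
    (hg : ∀ i, ConvexOn ℝ C (g i)) (hg' : ∀ i, LowerSemicontinuousOn (g i) C)
    (h : ∀ w ∈ stdSimplex ℝ ι, ∃ z ∈ C, ∑ i, w i * g i z ≤ 0) {ε : ℝ} (hε : 0 < ε) :
    ∃ z ∈ C, ∀ i, g i z < ε := by
  classical
  by_contra! hcon
  -- Sion's theorem in inf-sup form needs a complete lattice, hence `EReal`
  set N : ℝ → EReal := fun t => ((-t : ℝ) : EReal)
  have hN : Continuous N := continuous_coe_real_ereal.comp continuous_neg
  have hN' : Antitone N := fun a b hab => EReal.coe_le_coe_iff.2 (neg_le_neg hab)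
  have hsion := Sion.minimax' (X := stdSimplex ℝ ι) (Y := C)
    (f := fun w z => N (∑ i, w i * g i z))
    (ne_X := ⟨_, single_mem_stdSimplex ℝ (Classical.arbitrary ι)⟩)
    (cX := convex_stdSimplex ℝ ι) (kX := isCompact_stdSimplex ℝ ι) (cY := hC)
    (hfy := fun z _ => (hN.comp (by fun_prop)).lowerSemicontinuous.lowerSemicontinuousOn _)
    (hfy' := fun z _ => (((Fintype.linearCombination ℝ fun i => g i z).concaveOn
      (convex_stdSimplex ℝ ι)).quasiconcaveOn).antitone_comp (g := N) hN')
    (hfx := fun w hw => hN.comp_lowerSemicontinuousOn_antitone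
      (lowerSemicontinuousOn_sum fun i _ => (continuous_const_mul (w i)).comp_lowerSemicontinuousOn
        (hg' i) (monotone_mul_left_of_nonneg (hw.1 i))) hN')
    (hfx' := fun w hw => ((convexOn_sum_mul hC _ (fun i _ => hw.1 i)
      fun i _ => hg i).quasiconvexOn).antitone_comp (g := N) hN')
  have hle : (0 : EReal) ≤ ⨅ w ∈ stdSimplex ℝ ι, ⨆ z ∈ C, N (∑ i, w i * g i z) := by
    refine le_iInf₂ fun w hw => ?_
    obtain ⟨z, hz, hwz⟩ := h w hw
    exact le_iSup₂_of_le z hz (EReal.coe_nonneg.2 (neg_nonneg.2 hwz))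
  have hge : (⨆ z ∈ C, ⨅ w ∈ stdSimplex ℝ ι, N (∑ i, w i * g i z)) ≤ ((-ε : ℝ) : EReal) := by
    refine iSup₂_le fun z hz => ?_
    obtain ⟨i, hi⟩ := hcon z hz
    refine iInf₂_le_of_le (Pi.single i 1) (single_mem_stdSimplex ℝ i) ?_
    simpa [N, Pi.single_apply] using hi
  have := (hle.trans_eq hsion).trans hge
  exact absurd (EReal.coe_nonneg.1 this) (by linarith)

theorem sum_mul_mul_nonpos_of_add_nonpos {ι : Type*} [Fintype ι] {w : ι → ℝ} (hw : 0 ≤ w)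
    {F : ι → ι → ℝ} (hF : ∀ i j, F i j + F j i ≤ 0) : ∑ i, ∑ j, w i * w j * F i j ≤ 0 := by
  have hsymm : 2 * ∑ i, ∑ j, w i * w j * F i j = ∑ i, ∑ j, w i * w j * (F i j + F j i) := by
    rw [two_mul]
    nth_rw 2 [Finset.sum_comm]
    simp only [← Finset.sum_add_distrib]
    exact Finset.sum_congr rfl fun i _ => Finset.sum_congr rfl fun j _ => by ring
  have : ∑ i, ∑ j, w i * w j * (F i j + F j i) ≤ 0 :=
    Finset.sum_nonpos fun i _ => Finset.sum_nonpos fun j _ =>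
      mul_nonpos_of_nonneg_of_nonpos (mul_nonneg (hw i) (hw j)) (hF i j)
  linarith

section Bifunction

variable {H : Type*} [NormedAddCommGroup H] [InnerProductSpace ℝ H] {C : Set H} {f : H → H → ℝ}
  {r : ℝ}

/-- The regularized bifunction `(z, y) ↦ f z y + ⟪y - z, z - x⟫ / r` read in Minty's order `(y, z)`
and strengthened by `‖z - y‖² / r`, which makes it strongly convex in `z`. -/
noncomputable def mintyBifunction (f : H → H → ℝ) (r : ℝ) (x y z : H) : ℝ :=
  f y z + r⁻¹ * ⟪z - y, z - x⟫

theorem mul_inner_le_of_mintyBifunction_nonpos {x y z : H} {t : ℝ} (ht : t ∈ Ioo (0 : ℝ) 1)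
    (hf : ConvexOn ℝ C (f (t • y + (1 - t) • z))) (hy : y ∈ C) (hz : z ∈ C)
    (hzero : f (t • y + (1 - t) • z) (t • y + (1 - t) • z) = 0)
    (hminty : mintyBifunction f r x (t • y + (1 - t) • z) z ≤ 0) :
    (1 - t) * (r⁻¹ * ⟪z - y, z - x⟫) ≤ f (t • y + (1 - t) • z) y := by
  have hjensen := hf.2 hy hz ht.1.le (sub_nonneg.2 ht.2.le) (add_sub_cancel t 1)
  rw [hzero, smul_eq_mul, smul_eq_mul] at hjensen
  rw [mintyBifunction, show z - (t • y + (1 - t) • z) = t • (z - y) by module,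
    real_inner_smul_left] at hminty
  refine le_of_mul_le_mul_left ?_ ht.1
  nlinarith [ht.1, ht.2]

theorem regularized_nonneg_of_forall_mintyBifunction_nonpos (hC : Convex ℝ C)
    (hA1 : ∀ a ∈ C, f a a = 0) (hA2 : ∀ a ∈ C, ∀ b ∈ C, f a b + f b a ≤ 0)
    (hA3 : ∀ a ∈ C, ∀ b ∈ C, ∀ c ∈ C,
      limsup (fun t : ℝ => f (t • c + (1 - t) • a) b) (𝓝[>] 0) ≤ f a b)
    (hA4 : ∀ a ∈ C, ConvexOn ℝ C (f a) ∧ LowerSemicontinuousOn (f a) C) {x z : H} (hz : z ∈ C)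
    (hminty : ∀ y ∈ C, mintyBifunction f r x y z ≤ 0) {y : H} (hy : y ∈ C) :
    0 ≤ f z y + r⁻¹ * ⟪y - z, z - x⟫ := by
  set yt : ℝ → H := fun t => t • y + (1 - t) • z
  have hseg : ∀ᶠ t in 𝓝[>] (0 : ℝ), t ∈ Ioo (0 : ℝ) 1 := Ioo_mem_nhdsGT one_pos
  have hytC : ∀ t ∈ Ioo (0 : ℝ) 1, yt t ∈ C := fun t ht =>
    hC hy hz ht.1.le (sub_nonneg.2 ht.2.le) (add_sub_cancel t 1)
  have hyt : Tendsto yt (𝓝[>] 0) (𝓝[C] z) := by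
    refine tendsto_nhdsWithin_iff.2 ⟨?_, hseg.mono hytC⟩
    have : Continuous yt := by fun_prop
    simpa [yt] using (this.tendsto 0).mono_left nhdsWithin_le_nhds
  have hlower : ∀ᶠ t in 𝓝[>] (0 : ℝ), (1 - t) * (r⁻¹ * ⟪z - y, z - x⟫) ≤ f (yt t) y :=
    hseg.mono fun t ht => mul_inner_le_of_mintyBifunction_nonpos ht (hA4 _ (hytC t ht)).1 hy hz
      (hA1 _ (hytC t ht)) (hminty _ (hytC t ht))
  -- without this bound the `limsup` in `hA3` would be a junk value
  have hbdd : IsBoundedUnder (· ≤ ·) (𝓝[>] 0) fun t => f (yt t) y := by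
    refine isBoundedUnder_of_eventually_le (a := 1 - f y z) ?_
    filter_upwards [hyt.eventually ((hA4 y hy).2 z hz (f y z - 1) (by linarith)), hseg]
      with t hlsc ht
    linarith [hA2 _ (hytC t ht) y hy]
  have hlim : Tendsto (fun t : ℝ => (1 - t) * (r⁻¹ * ⟪z - y, z - x⟫)) (𝓝[>] 0)
      (𝓝 (r⁻¹ * ⟪z - y, z - x⟫)) := by
    have : Continuous fun t : ℝ => (1 - t) * (r⁻¹ * ⟪z - y, z - x⟫) := by fun_prop
    simpa using (this.tendsto 0).mono_left nhdsWithin_le_nhds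
  have := hlim.limsup_eq.symm.le.trans
    ((limsup_le_limsup hlower hlim.isCoboundedUnder_le hbdd).trans (hA3 z hz y hy y hy))
  rw [← neg_sub y z, inner_neg_left] at this
  linarith

theorem strongConvexOn_mintyBifunction (hC : Convex ℝ C) {y : H} (hf : ConvexOn ℝ C (f y))
    (x : H) : StrongConvexOn C (2 * r⁻¹) (mintyBifunction f r x y) := by
  rw [strongConvexOn_iff_convex]
  have haff : ConvexOn ℝ C fun z => -r⁻¹ * ⟪x + y, z⟫ + r⁻¹ * ⟪y, x⟫ :=
    ((-r⁻¹ • innerₛₗ ℝ (x + y)).convexOn hC).add_const _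
  have heq : (fun z => mintyBifunction f r x y z - 2 * r⁻¹ / 2 * ‖z‖ ^ 2) =
      f y + fun z => -r⁻¹ * ⟪x + y, z⟫ + r⁻¹ * ⟪y, x⟫ := by
    funext z
    simp only [mintyBifunction, Pi.add_apply, inner_sub_left, inner_sub_right, inner_add_left,
      real_inner_self_eq_norm_sq, real_inner_comm z]
    ring
  exact heq ▸ hf.add haff

theorem lowerSemicontinuousOn_mintyBifunction {y : H} (hf : LowerSemicontinuousOn (f y) C)
    (x : H) : LowerSemicontinuousOn (mintyBifunction f r x y) C :=
  hf.add ((by fun_prop : Continuous fun z : H => r⁻¹ * ⟪z - y, z - x⟫).lowerSemicontinuous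
    |>.lowerSemicontinuousOn C)

theorem sum_mul_mintyBifunction_sum_smul_nonpos (hmono : ∀ a ∈ C, ∀ b ∈ C, f a b + f b a ≤ 0)
    (hf : ∀ a ∈ C, ConvexOn ℝ C (f a)) {ι : Type*} [Fintype ι] {p : ι → H} (hp : ∀ i, p i ∈ C)
    {w : ι → ℝ} (hw : w ∈ stdSimplex ℝ ι) (x : H) :
    ∑ i, w i * mintyBifunction f r x (p i) (∑ j, w j • p j) ≤ 0 := by
  set z := ∑ j, w j • p j
  have hjensen : ∀ i, f (p i) z ≤ ∑ j, w j * f (p i) (p j) := fun i => by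
    simpa using (hf _ (hp i)).map_sum_le (fun j _ => hw.1 j) hw.2 fun j _ => hp j
  have hbary : ∑ i, w i * ⟪z - p i, z - x⟫ = 0 := by
    simp_rw [← real_inner_smul_left, ← sum_inner, smul_sub, Finset.sum_sub_distrib,
      ← Finset.sum_smul, hw.2, one_smul, z, sub_self, inner_zero_left]
  calc ∑ i, w i * mintyBifunction f r x (p i) z
      = ∑ i, w i * f (p i) z + r⁻¹ * ∑ i, w i * ⟪z - p i, z - x⟫ := by
        simp only [mintyBifunction, Finset.mul_sum, ← Finset.sum_add_distrib]
        exact Finset.sum_congr rfl fun i _ => by ring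
    _ ≤ ∑ i, ∑ j, w i * w j * f (p i) (p j) := by
        rw [hbary, mul_zero, add_zero]
        refine Finset.sum_le_sum fun i _ =>
          (mul_le_mul_of_nonneg_left (hjensen i) (hw.1 i)).trans ?_
        simp only [Finset.mul_sum, mul_assoc, le_refl]
    _ ≤ 0 := sum_mul_mul_nonpos_of_add_nonpos hw.1 fun i j => hmono _ (hp i) _ (hp j)

theorem exists_forall_mintyBifunction_lt (hC : Convex ℝ C)
    (hmono : ∀ a ∈ C, ∀ b ∈ C, f a b + f b a ≤ 0)
    (hf : ∀ a ∈ C, ConvexOn ℝ C (f a) ∧ LowerSemicontinuousOn (f a) C) (hr : 0 < r) (x : H)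
    {ι : Type*} [Fintype ι] [Nonempty ι] {p : ι → H} (hp : ∀ i, p i ∈ C) {ε : ℝ} (hε : 0 < ε) :
    ∃ z ∈ C, ∀ i, mintyBifunction f r x (p i) z < ε :=
  exists_forall_lt_of_forall_mem_stdSimplex hC
    (fun i => (strongConvexOn_mintyBifunction hC (hf _ (hp i)).1 x).convexOn
      fun _ => by positivity)
    (fun i => lowerSemicontinuousOn_mintyBifunction (hf _ (hp i)).2 x)
    (fun w hw => ⟨_, hC.sum_mem (fun i _ => hw.1 i) hw.2 (fun i _ => hp i),
      sum_mul_mintyBifunction_sum_smul_nonpos hmono (fun a ha => (hf a ha).1) hp hw x⟩) hε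

theorem exists_sup'_mintyBifunction_lt (hC : Convex ℝ C)
    (hmono : ∀ a ∈ C, ∀ b ∈ C, f a b + f b a ≤ 0)
    (hf : ∀ a ∈ C, ConvexOn ℝ C (f a) ∧ LowerSemicontinuousOn (f a) C) (hr : 0 < r) (x : H)
    {T : Finset C} (hT : T.Nonempty) {ε : ℝ} (hε : 0 < ε) :
    ∃ z ∈ C, T.sup' hT (fun y => mintyBifunction f r x y) z < ε := by
  have : Nonempty T := hT.to_subtype
  obtain ⟨z, hz, hlt⟩ := exists_forall_mintyBifunction_lt hC hmono hf hr x
    (p := fun y : T => (y : H)) (fun y => y.1.2) hε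
  refine ⟨z, hz, ?_⟩
  rw [Finset.sup'_apply, Finset.sup'_lt_iff]
  exact fun y hy => hlt ⟨y, hy⟩

theorem exists_forall_mintyBifunction_nonpos [CompleteSpace H] (hne : C.Nonempty)
    (hcl : IsClosed C) (hC : Convex ℝ C) (hmono : ∀ a ∈ C, ∀ b ∈ C, f a b + f b a ≤ 0)
    (hf : ∀ a ∈ C, ConvexOn ℝ C (f a) ∧ LowerSemicontinuousOn (f a) C) (hr : 0 < r) (x : H) :
    ∃ z ∈ C, ∀ y ∈ C, mintyBifunction f r x y z ≤ 0 := by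
  classical
  obtain ⟨y₀, hy₀⟩ := hne
  set Θ : Finset C → H → ℝ := fun T =>
    (insert ⟨y₀, hy₀⟩ T).sup' (Finset.insert_nonempty _ _) fun y => mintyBifunction f r x y
  have hΘ (T) : StrongConvexOn C (2 * r⁻¹) (Θ T) ∧ LowerSemicontinuousOn (Θ T) C :=
    Finset.sup'_induction _ _
      (p := fun g => StrongConvexOn C (2 * r⁻¹) g ∧ LowerSemicontinuousOn g C)
      (fun _ h₁ _ h₂ => ⟨h₁.1.sup h₂.1, h₁.2.sup h₂.2⟩) fun y _ =>
      ⟨strongConvexOn_mintyBifunction hC (hf y y.2).1 x,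
        lowerSemicontinuousOn_mintyBifunction (hf y y.2).2 x⟩
  choose z hzC hzmin using fun T =>
    (hΘ T).1.exists_isMinOn (by positivity) (hΘ T).2 hcl ⟨y₀, hy₀⟩
  have hΘ_mono {T U : Finset C} (hTU : T ≤ U) : Θ T ≤ Θ U := fun a => by
    simpa only [Θ, Finset.sup'_apply] using
      Finset.sup'_mono _ (Finset.insert_subset_insert _ hTU) (Finset.insert_nonempty _ _)
  have hΘ_nonpos (T) : Θ T (z T) ≤ 0 := le_of_forall_pos_lt_add fun ε hε => by
    obtain ⟨a, ha, hlt⟩ := exists_sup'_mintyBifunction_lt hC hmono hf hr x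
      (Finset.insert_nonempty ⟨y₀, hy₀⟩ T) hε
    simpa using (hzmin T ha).trans_lt hlt
  have hcauchy : CauchySeq z := by
    refine Metric.cauchySeq_of_mul_sq_dist_le_sub (μ := fun T => Θ T (z T))
      ⟨0, by rintro _ ⟨T, rfl⟩; exact hΘ_nonpos T⟩ (by positivity : 0 < 2 * r⁻¹ / 4)
      fun T U hTU => ?_
    have := (hΘ T).1.mul_sq_norm_sub_le_of_isMinOn (hzC T) (hzmin T) (hzC U)
    rw [dist_eq_norm]
    linarith [hΘ_mono hTU (z U)]
  obtain ⟨zs, hzs⟩ := cauchySeq_tendsto_of_complete hcauchy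
  have hzsC : zs ∈ C := hcl.mem_of_tendsto hzs (Eventually.of_forall hzC)
  refine ⟨zs, hzsC, fun y hy => LowerSemicontinuousWithinAt.le_of_tendsto
    (lowerSemicontinuousOn_mintyBifunction (hf y hy).2 x zs hzsC)
    (tendsto_nhdsWithin_iff.2 ⟨hzs, Eventually.of_forall hzC⟩) ?_⟩
  filter_upwards [eventually_ge_atTop {⟨y, hy⟩}] with T hT
  refine le_trans ?_ (hΘ_nonpos T)
  simpa only [Θ, Finset.sup'_apply] using
    Finset.le_sup' (fun y : C => mintyBifunction f r x y (z T))
      (Finset.mem_insert_of_mem (Finset.singleton_subset_iff.1 hT))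

end Bifunction

/-- Existence of solutions of the regularized equilibrium problem, under
conditions (A1)-(A4) on the bifunction f. -/
theorem regularized_equilibrium_exists {H : Type*} [NormedAddCommGroup H]
    [InnerProductSpace ℝ H] [CompleteSpace H]
    (C : Set H) (hne : C.Nonempty) (hcl : IsClosed C) (hconv : Convex ℝ C)
    (f : H → H → ℝ)
    (hA1 : ∀ x ∈ C, f x x = 0)
    (hA2 : ∀ x ∈ C, ∀ y ∈ C, f x y + f y x ≤ 0)
    (hA3 : ∀ x ∈ C, ∀ y ∈ C, ∀ z ∈ C,
      Filter.limsup (fun t : ℝ => f (t • z + (1 - t) • x) y) (nhdsWithin 0 (Set.Ioi 0))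
        ≤ f x y)
    (hA4 : ∀ x ∈ C, ConvexOn ℝ C (f x) ∧ LowerSemicontinuousOn (f x) C)
    (r : ℝ) (hr : 0 < r) (x : H) :
    ∃ z ∈ C, ∀ y ∈ C, f z y + (1 / r) * ⟪y - z, z - x⟫ ≥ 0 := by
  obtain ⟨z, hz, hminty⟩ := exists_forall_mintyBifunction_nonpos hne hcl hconv hA2 hA4 hr x
  refine ⟨z, hz, fun y hy => ?_⟩
  rw [one_div]
  exact regularized_nonneg_of_forall_mintyBifunction_nonpos hconv hA1 hA2 hA3 hA4 hz hminty hy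
end

section
/- Under conditions (A1)–(A4), for r > 0, x ∈ H and q a fixed point of T_r, one has ‖q − T_r x‖² + ‖T_r x − x‖² ≤ ‖q − x‖². -/
open RealInnerProductSpace Filter Topology

/-- For the resolvent T_r of a bifunction satisfying (A1)-(A4), if q is a fixed
point of T_r and u = T_r x, then ‖q − u‖² + ‖u − x‖² ≤ ‖q − x‖². -/
theorem resolvent_fejer_inequality {H : Type*} [NormedAddCommGroup H]
    [InnerProductSpace ℝ H]
    (C : Set H) (hne : C.Nonempty) (hcl : IsClosed C) (hconv : Convex ℝ C)
    (f : H → H → ℝ)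
    (hA1 : ∀ x ∈ C, f x x = 0)
    (hA2 : ∀ x ∈ C, ∀ y ∈ C, f x y + f y x ≤ 0)
    (hA3 : ∀ x ∈ C, ∀ y ∈ C, ∀ z ∈ C,
      Filter.limsup (fun t : ℝ => f (t • z + (1 - t) • x) y) (nhdsWithin 0 (Set.Ioi 0))
        ≤ f x y)
    (hA4 : ∀ x ∈ C, ConvexOn ℝ C (f x) ∧ LowerSemicontinuousOn (f x) C)
    (r : ℝ) (hr : 0 < r) (x : H) (u : H)
    (hu : u ∈ C ∧ ∀ y ∈ C, f u y + (1 / r) * ⟪y - u, u - x⟫ ≥ 0)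
    (q : H) (hq : q ∈ C ∧ ∀ y ∈ C, f q y + (1 / r) * ⟪y - q, q - q⟫ ≥ 0) :
    ‖q - u‖ ^ 2 + ‖u - x‖ ^ 2 ≤ ‖q - x‖ ^ 2 := by
  obtain ⟨huC, hures⟩ := hu
  obtain ⟨hqC, hqres⟩ := hq
  have h1 := hures q hqC
  have h2 := hqres u huC
  simp only [sub_self, inner_zero_right, mul_zero, add_zero] at h2
  have h3 := hA2 u huC q hqC
  have hinner : 0 ≤ ⟪q - u, u - x⟫ := by
    have hrinv : 0 < 1 / r := by positivity
    nlinarith [h1, h2, h3]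
  have hexp : q - x = (q - u) + (u - x) := by abel
  have := norm_add_sq_real (q - u) (u - x)
  rw [hexp, this]
  nlinarith [hinner]
end

section
/- Let 0 < η < ξ < 1 and define B : [0,1] → ℝ by B(x) = (η/ξ)x for 0 ≤ x ≤ ξ and B(x) = η for ξ ≤ x ≤ 1; let f(x,y) = B(x)(y − x). Then f satisfies conditions (A1)–(A4) (f(x,x)=0; f(x,y)+f(y,x) ≤ 0; upper hemicontinuity in the first argument along segments; y ↦ f(x,y) convex and continuous), and the equilibrium problem EP(f) = {x ∈ [0,1] : f(x,y) ≥ 0 ∀ y ∈ [0,1]} has unique solution x = 0. -/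
open Filter Topology

/-- The bifunction f(x,y) = B(x)(y−x), where B(x) = (η/ξ)x on [0,ξ] and B(x) = η
on [ξ,1], satisfies (A1)-(A4) on C = [0,1] and the equilibrium problem EP(f)
has unique solution 0. -/
theorem equilibrium_bifunction_example (ξ η : ℝ) (hη0 : 0 < η) (hηξ : η < ξ)
    (hξ1 : ξ < 1) :
    let B : ℝ → ℝ := fun x => if x ≤ ξ then (η / ξ) * x else η
    let f : ℝ → ℝ → ℝ := fun x y => B x * (y - x)
    (∀ x ∈ Set.Icc (0:ℝ) 1, f x x = 0) ∧
    (∀ x ∈ Set.Icc (0:ℝ) 1, ∀ y ∈ Set.Icc (0:ℝ) 1, f x y + f y x ≤ 0) ∧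
    (∀ x ∈ Set.Icc (0:ℝ) 1, ∀ y ∈ Set.Icc (0:ℝ) 1, ∀ z ∈ Set.Icc (0:ℝ) 1,
      Filter.limsup (fun τ : ℝ => f (τ * z + (1 - τ) * x) y)
        (nhdsWithin 0 (Set.Ioi 0)) ≤ f x y) ∧
    (∀ x ∈ Set.Icc (0:ℝ) 1,
      ConvexOn ℝ (Set.Icc (0:ℝ) 1) (f x) ∧ ContinuousOn (f x) (Set.Icc (0:ℝ) 1)) ∧
    {x ∈ Set.Icc (0:ℝ) 1 | ∀ y ∈ Set.Icc (0:ℝ) 1, f x y ≥ 0} = {0} := by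
  have hξ0 : 0 < ξ := hη0.trans hηξ
  intro B f
  have hBmono : ∀ x y : ℝ, x ≤ y → B x ≤ B y := by
    intro x y hxy
    simp only [B]
    split_ifs with h1 h2
    · exact mul_le_mul_of_nonneg_left hxy (by positivity)
    · calc (η / ξ) * x ≤ (η / ξ) * ξ := mul_le_mul_of_nonneg_left h1 (by positivity)
        _ = η := by field_simp
    · linarith
    · exact le_refl _
  have hBcont : Continuous B := by
    apply Continuous.if_le (by continuity) continuous_const continuous_id continuous_const
    intro x hx
    simp only [id] at hx
    subst hx
    field_simp
  refine ⟨?_, ?_, ?_, ?_, ?_⟩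
  · intro x _; simp [f]
  · intro x _ y _
    have h : f x y + f y x = (B x - B y) * (y - x) := by simp only [f]; ring
    rw [h]
    rcases le_total x y with hxy | hxy
    · have := hBmono x y hxy
      nlinarith
    · have := hBmono y x hxy
      nlinarith
  · intro x _ y _ z _
    have hc : Continuous fun τ : ℝ => f (τ * z + (1 - τ) * x) y := by
      simp only [f]
      exact (hBcont.comp (by continuity)).mul (by continuity)
    have ht : Tendsto (fun τ : ℝ => f (τ * z + (1 - τ) * x) y) (𝓝[>] (0:ℝ)) (𝓝 (f x y)) := by
      have := (hc.tendsto 0).mono_left (nhdsWithin_le_nhds : 𝓝[>] (0:ℝ) ≤ 𝓝 0)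
      simpa using this
    exact ht.limsup_eq.le
  · intro x _
    constructor
    · refine ⟨convex_Icc 0 1, ?_⟩
      intro a _ b _ p q hp hq hpq
      simp only [f, smul_eq_mul]
      apply le_of_eq
      linear_combination (B x * x) * hpq
    · show ContinuousOn (fun y => B x * (y - x)) _
      exact (continuous_const.mul (continuous_id.sub continuous_const)).continuousOn
  · ext x
    simp only [Set.mem_setOf_eq, Set.mem_singleton_iff]
    constructor
    · rintro ⟨⟨hx0, hx1⟩, hEP⟩
      by_contra hne
      have hxpos : 0 < x := lt_of_le_of_ne hx0 (Ne.symm hne)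
      have hBpos : 0 < B x := by
        simp only [B]; split_ifs with h
        · positivity
        · exact hη0
      have h0 := hEP 0 ⟨le_refl 0, by linarith⟩
      simp only [f] at h0
      nlinarith
    · rintro rfl
      refine ⟨⟨le_refl 0, by linarith⟩, fun y hy => ?_⟩
      simp [f, B, hξ0.le]
end
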